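/- arXiv:2111.04055 — 2 statements merged into one kernel-verified Lean document; each statement's English description precedes it below -/
import Mathlib

section
/- There is no self-orthogonal quantum Latin square of dimension 2. -/
noncomputable section

/-- The inner product on a complex inner product space, as a function into `ℂ`. -/
def ip {E : Type*} [NormedAddCommGroup E] [InnerProductSpace ℂ E] (x y : E) : ℂ :=
  inner ℂ x y

/-- Entrywise complex conjugation of a vector in `ℂ^ι` (in the standard basis). -/
def conjE {ι : Type*} [Fintype ι] (v : EuclideanSpace ℂ ι) : EuclideanSpace ℂ ι :=
  WithLp.toLp 2 (fun k => star (v k))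

/-- A quantum Latin square of dimension `d`: a `d × d` array of vectors in `ℂ^d`
whose rows and columns are orthonormal bases (orthonormal families of `d` vectors
in the `d`-dimensional space `ℂ^d`). -/
def IsQLS {d : ℕ} (Φ : Fin d → Fin d → EuclideanSpace ℂ (Fin d)) : Prop :=
  (∀ i, Orthonormal ℂ (Φ i)) ∧ (∀ j, Orthonormal ℂ (fun i => Φ i j))

/-- Two `d × d` arrays of vectors are orthogonal quantum Latin squares:
`⟨Φ_{i,j},Φ_{i',j'}⟩⟨Ψ_{i,j},Ψ_{i',j'}⟩ = δ_{ii'}δ_{jj'}`, i.e. the tensor products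
`Φ_{i,j} ⊗ Ψ_{i,j}` form an orthonormal basis of `ℂ^d ⊗ ℂ^d`. -/
def OrthQLS {d : ℕ} (Φ Ψ : Fin d → Fin d → EuclideanSpace ℂ (Fin d)) : Prop :=
  ∀ i j i' j', ip (Φ i j) (Φ i' j') * ip (Ψ i j) (Ψ i' j') =
    if i = i' ∧ j = j' then 1 else 0

/-- A self-orthogonal quantum Latin square: a quantum Latin square that is
orthogonal to its conjugate transpose, i.e.
`⟨Φ_{i,j},Φ_{i',j'}⟩ ⋅ conj ⟨Φ_{j,i},Φ_{j',i'}⟩ = δ_{ii'}δ_{jj'}`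
(the vectors `Φ_{i,j} ⊗ conj (Φ_{j,i})` form an orthonormal basis of `ℂ^d ⊗ ℂ^d`). -/
def IsSOQLS {d : ℕ} (Φ : Fin d → Fin d → EuclideanSpace ℂ (Fin d)) : Prop :=
  IsQLS Φ ∧ OrthQLS Φ (fun i j => conjE (Φ j i))

/-!
Self-orthogonality, read at the pairs `(0,0)` and `(1,1)` of diagonal positions, gives
`|⟨Φ₀₀, Φ₁₁⟩|² = 0`. Column orthonormality gives `⟨Φ₁₀, Φ₀₀⟩ = 0`. So the unit vector `Φ₀₀`
is orthogonal to the whole row `Φ₁₀, Φ₁₁`, which is an orthonormal basis of `ℂ²`: absurd.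
-/

theorem Orthonormal.eq_zero_of_forall_inner_eq_zero {𝕜 E ι : Type*} [RCLike 𝕜]
    [NormedAddCommGroup E] [InnerProductSpace 𝕜 E] [FiniteDimensional 𝕜 E]
    [Fintype ι] [Nonempty ι] {v : ι → E} (hv : Orthonormal 𝕜 v)
    (hcard : Fintype.card ι = Module.finrank 𝕜 E) {x : E} (hx : ∀ i, inner 𝕜 (v i) x = 0) :
    x = 0 :=
  InnerProductSpace.ext_inner_left_basis (basisOfOrthonormalOfCardEqFinrank hv hcard) fun i => by
    simpa using hx i

theorem ip_conjE {ι : Type*} [Fintype ι] (x y : EuclideanSpace ℂ ι) :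
    ip (conjE x) (conjE y) = star (ip x y) := by
  simp only [ip, conjE, PiLp.inner_apply, RCLike.inner_apply, starRingEnd_apply, star_sum,
    star_mul', star_star]

theorem IsSOQLS.ip_diag_eq_zero {d : ℕ} {Φ : Fin d → Fin d → EuclideanSpace ℂ (Fin d)}
    (h : IsSOQLS Φ) {i j : Fin d} (hij : i ≠ j) : ip (Φ i i) (Φ j j) = 0 := by
  have horth := h.2 i i j j
  rw [ip_conjE, if_neg (fun h => hij h.1)] at horth
  exact (CStarRing.mul_star_self_eq_zero_iff _).mp horth

/-- There is no self-orthogonal quantum Latin square of dimension 2. -/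
theorem no_soqls_dim_two :
    ¬ ∃ Φ : Fin 2 → Fin 2 → EuclideanSpace ℂ (Fin 2), IsSOQLS Φ := by
  rintro ⟨Φ, hΦ⟩
  have h11 : inner ℂ (Φ 1 1) (Φ 0 0) = 0 := by
    rw [← inner_conj_symm, ← ip, hΦ.ip_diag_eq_zero (by decide), map_zero]
  obtain ⟨⟨hrow, hcol⟩, -⟩ := hΦ
  have h10 : inner ℂ (Φ 1 0) (Φ 0 0) = 0 := (hcol 0).2 (by decide)
  have hzero : Φ 0 0 = 0 :=
    (hrow 1).eq_zero_of_forall_inner_eq_zero (by simp) fun j => by fin_cases j <;> assumption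
  simpa [hzero] using (hrow 0).1 0
end
end

section
/- A quantum Latin square Φ is orthogonal to its conjugate transpose Φ† (with entries conj(Φ_{j,i})) if and only if Φ is orthogonal to its transpose Φᵀ (with entries Φ_{j,i}). -/
noncomputable section

open ComplexConjugate

lemma ip_conjE_conjE {ι : Type*} [Fintype ι] (u v : EuclideanSpace ℂ ι) :
    ip (conjE u) (conjE v) = conj (ip u v) := by
  simp only [ip, conjE, EuclideanSpace.inner_eq_star_dotProduct]
  simp [dotProduct]

lemma mul_conj_eq_ite_iff_mul_eq_ite (a b : ℂ) (p : Prop) [Decidable p]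
    (hb : p → conj b = b) :
    a * conj b = (if p then 1 else 0) ↔ a * b = if p then 1 else 0 := by
  split_ifs with hp
  · rw [hb hp]
  · simp only [mul_eq_zero, map_eq_zero]

/-- Whether `Φ` is orthogonal to `Ψ` only sees the Gram entries `⟨Ψ_{i,j},Ψ_{i',j'}⟩` up to
complex conjugation: the off-diagonal conditions say that products vanish, and the diagonal
entries `‖Ψ_{i,j}‖²` are real. -/
theorem orthQLS_iff_of_ip_eq_conj {d : ℕ} (Φ Ψ Ψ' : Fin d → Fin d → EuclideanSpace ℂ (Fin d))
    (h : ∀ i j i' j', ip (Ψ' i j) (Ψ' i' j') = conj (ip (Ψ i j) (Ψ i' j'))) :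
    OrthQLS Φ Ψ' ↔ OrthQLS Φ Ψ := by
  refine forall₄_congr fun i j i' j' => ?_
  rw [h]
  refine mul_conj_eq_ite_iff_mul_eq_ite _ _ _ ?_
  rintro ⟨rfl, rfl⟩
  exact inner_self_conj (𝕜 := ℂ) _

theorem orth_conjTranspose_iff_orth_transpose_general {d : ℕ}
    (Φ : Fin d → Fin d → EuclideanSpace ℂ (Fin d)) :
    OrthQLS Φ (fun i j => conjE (Φ j i)) ↔ OrthQLS Φ (fun i j => Φ j i) :=
  orthQLS_iff_of_ip_eq_conj Φ _ _ fun _ _ _ _ => ip_conjE_conjE _ _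

/-- A quantum Latin square `Φ` is orthogonal to its conjugate transpose `Φ†`
(with entries `conj (Φ_{j,i})`) if and only if it is orthogonal to its transpose `Φᵀ`
(with entries `Φ_{j,i}`). -/
theorem orth_conjTranspose_iff_orth_transpose {d : ℕ}
    (Φ : Fin d → Fin d → EuclideanSpace ℂ (Fin d)) (hΦ : IsQLS Φ) :
    OrthQLS Φ (fun i j => conjE (Φ j i)) ↔ OrthQLS Φ (fun i j => Φ j i) :=
  orth_conjTranspose_iff_orth_transpose_general Φ
end
end
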